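/- arXiv:2107.11421 — 2 statements merged into one kernel-verified Lean document; each statement's English description precedes it below -/
import Mathlib

section
/- Let S be a VPA over an alphabet A with n states and let B ⊆ A. Then there exists a non-blocking VPA Q over A with at most 2n+2 states and no ε-transitions such that L(Q) = L(S)·B, the concatenation of L(S) with the single-symbol words of B. -/
inductive VPKind : Type where
  | call : VPKind
  | ret : VPKind
  | intern : VPKind

/-- A visibly pushdown automaton over an alphabet `A` partitioned by `kind` into
call (push), return (pop) and simple (internal) symbols.  The stack bottom `⊥` is
implicit: a stack is a `List Stack`, the empty list meaning the stack contains only `⊥`.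
`intT` transitions labelled by `none` are ε-transitions. -/
structure VPA (A : Type) (kind : A → VPKind) where
  State : Type
  Stack : Type
  fintypeState : Fintype State
  init : Set State
  final : Set State
  pushT : Set (State × A × Stack × State)
  popT : Set (State × A × Option Stack × State)
  intT : Set (State × Option A × State)
  push_call : ∀ p a Z q, (p, a, Z, q) ∈ pushT → kind a = VPKind.call
  pop_ret : ∀ p a Z q, (p, a, Z, q) ∈ popT → kind a = VPKind.ret
  int_simple : ∀ p a q, (p, some a, q) ∈ intT → kind a = VPKind.intern

attribute [instance] VPA.fintypeState

namespace VPA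

variable {A : Type} {kind : A → VPKind}

abbrev Conf (M : VPA A kind) : Type := M.State × List A × List M.Stack

inductive Step (M : VPA A kind) : M.Conf → M.Conf → Prop where
  | push {p q : M.State} {a : A} {Z : M.Stack} {σ : List A} {α : List M.Stack} :
      (p, a, Z, q) ∈ M.pushT → Step M (p, a :: σ, α) (q, σ, Z :: α)
  | pop {p q : M.State} {a : A} {Z : M.Stack} {σ : List A} {α : List M.Stack} :
      (p, a, some Z, q) ∈ M.popT → Step M (p, a :: σ, Z :: α) (q, σ, α)
  | popEmpty {p q : M.State} {a : A} {σ : List A} :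
      (p, a, none, q) ∈ M.popT → Step M (p, a :: σ, []) (q, σ, [])
  | int {p q : M.State} {a : A} {σ : List A} {α : List M.Stack} :
      (p, some a, q) ∈ M.intT → Step M (p, a :: σ, α) (q, σ, α)
  | eps {p q : M.State} {σ : List A} {α : List M.Stack} :
      (p, none, q) ∈ M.intT → Step M (p, σ, α) (q, σ, α)

/-- Reflexive-transitive closure `↦*` of the one-step move relation. -/
def Steps (M : VPA A kind) : M.Conf → M.Conf → Prop := Relation.ReflTransGen M.Step

/-- `n`-th power `↦ⁿ` of the one-step move relation. -/
def StepN (M : VPA A kind) : ℕ → M.Conf → M.Conf → Prop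
  | 0 => fun c c' => c = c'
  | n + 1 => fun c c' => ∃ d, M.Step c d ∧ StepN M n d c'

def Lang (M : VPA A kind) : Set (List A) :=
  { σ | ∃ s₀ ∈ M.init, ∃ p ∈ M.final, ∃ β, M.Steps (s₀, σ, []) (p, [], β) }

def NoEps (M : VPA A kind) : Prop := ∀ p q, (p, none, q) ∉ M.intT

def Deterministic (M : VPA A kind) : Prop :=
  M.init.Subsingleton ∧
  (∀ p a Z₁ q₁ Z₂ q₂, (p, a, Z₁, q₁) ∈ M.pushT → (p, a, Z₂, q₂) ∈ M.pushT →
      Z₁ = Z₂ ∧ q₁ = q₂) ∧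
  (∀ p a Z q₁ q₂, (p, a, Z, q₁) ∈ M.popT → (p, a, Z, q₂) ∈ M.popT → q₁ = q₂) ∧
  (∀ p a q₁ q₂, (p, a, q₁) ∈ M.intT → (p, a, q₂) ∈ M.intT → q₁ = q₂) ∧
  (∀ p q',
    ((∃ a Z q, (p, a, Z, q) ∈ M.pushT) ∨ (∃ a Z q, (p, a, Z, q) ∈ M.popT) ∨
      (∃ a q, (p, some a, q) ∈ M.intT)) → (p, none, q') ∉ M.intT)

def NonBlocking (M : VPA A kind) : Prop :=
  ∀ (s : M.State) (σ : List A) (α : List M.Stack), ∃ p β, M.Steps (s, σ, α) (p, [], β)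

/-- The synchronous product of two VPAs over a common alphabet. -/
def prod (M N : VPA A kind) : VPA A kind where
  State := M.State × N.State
  Stack := M.Stack × N.Stack
  fintypeState := inferInstance
  init := M.init ×ˢ N.init
  final := M.final ×ˢ N.final
  pushT := { t | (t.1.1, t.2.1, t.2.2.1.1, t.2.2.2.1) ∈ M.pushT ∧
                 (t.1.2, t.2.1, t.2.2.1.2, t.2.2.2.2) ∈ N.pushT }
  popT := { t |
      match t.2.2.1 with
      | some Z => (t.1.1, t.2.1, some Z.1, t.2.2.2.1) ∈ M.popT ∧
                  (t.1.2, t.2.1, some Z.2, t.2.2.2.2) ∈ N.popT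
      | none => (t.1.1, t.2.1, (none : Option M.Stack), t.2.2.2.1) ∈ M.popT ∧
                (t.1.2, t.2.1, (none : Option N.Stack), t.2.2.2.2) ∈ N.popT }
  intT := { t |
      match t.2.1 with
      | some a => (t.1.1, some a, t.2.2.1) ∈ M.intT ∧ (t.1.2, some a, t.2.2.2) ∈ N.intT
      | none => (t.1.1 = t.2.2.1 ∧ (t.1.2, none, t.2.2.2) ∈ N.intT) ∨
                (t.1.2 = t.2.2.2 ∧ (t.1.1, none, t.2.2.1) ∈ M.intT) }
  push_call := fun _ _ _ _ h => M.push_call _ _ _ _ h.1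
  pop_ret := by
    intro p a Z q h
    cases Z with
    | some Z => exact M.pop_ret _ _ _ _ h.1
    | none => exact M.pop_ret _ _ _ _ h.1
  int_simple := fun _ _ _ h => M.int_simple _ _ _ h.1

end VPA

/-- A visibly pushdown transition system over an alphabet `L` partitioned by `kind`.
`intT` transitions labelled by `none` are silent `ς`-transitions. -/
structure VPTS (L : Type) (kind : L → VPKind) where
  State : Type
  Stack : Type
  fintypeState : Fintype State
  init : Set State
  pushT : Set (State × L × Stack × State)
  popT : Set (State × L × Option Stack × State)
  intT : Set (State × Option L × State)
  push_call : ∀ p a Z q, (p, a, Z, q) ∈ pushT → kind a = VPKind.call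
  pop_ret : ∀ p a Z q, (p, a, Z, q) ∈ popT → kind a = VPKind.ret
  int_simple : ∀ p a q, (p, some a, q) ∈ intT → kind a = VPKind.intern

attribute [instance] VPTS.fintypeState

namespace VPTS

variable {L : Type} {kind : L → VPKind}

abbrev Conf (M : VPTS L kind) : Type := M.State × List M.Stack

/-- `M.Obs c σ c'` means `c ⇒^σ c'`: there is a sequence of one-step moves from `c`
to `c'` whose sequence of non-silent labels is `σ`. -/
inductive Obs (M : VPTS L kind) : M.Conf → List L → M.Conf → Prop where
  | refl (c : M.Conf) : Obs M c [] c
  | push {p q : M.State} {a : L} {Z : M.Stack} {α : List M.Stack} {σ : List L} {c : M.Conf} :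
      (p, a, Z, q) ∈ M.pushT → Obs M (q, Z :: α) σ c → Obs M (p, α) (a :: σ) c
  | pop {p q : M.State} {a : L} {Z : M.Stack} {α : List M.Stack} {σ : List L} {c : M.Conf} :
      (p, a, some Z, q) ∈ M.popT → Obs M (q, α) σ c → Obs M (p, Z :: α) (a :: σ) c
  | popEmpty {p q : M.State} {a : L} {σ : List L} {c : M.Conf} :
      (p, a, none, q) ∈ M.popT → Obs M (q, []) σ c → Obs M (p, []) (a :: σ) c
  | int {p q : M.State} {a : L} {α : List M.Stack} {σ : List L} {c : M.Conf} :
      (p, some a, q) ∈ M.intT → Obs M (q, α) σ c → Obs M (p, α) (a :: σ) c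
  | silent {p q : M.State} {α : List M.Stack} {σ : List L} {c : M.Conf} :
      (p, none, q) ∈ M.intT → Obs M (q, α) σ c → Obs M (p, α) σ c

/-- The observable traces of `M`. -/
def otr (M : VPTS L kind) : Set (List L) :=
  { σ | ∃ s₀ ∈ M.init, ∃ c, M.Obs (s₀, []) σ c }

/-- `I` (D,F)-visibly conforms to `S`. -/
def VConf (I S : VPTS L kind) (D F : Set (List L)) : Prop :=
  (∀ σ ∈ I.otr ∩ F, σ ∉ S.otr) ∧ (∀ σ ∈ I.otr ∩ D, σ ∈ S.otr)

def after (M : VPTS L kind) (c : M.Conf) (σ : List L) : Set M.Conf :=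
  { c' | M.Obs c σ c' }

/-- The output symbols (members of `LU`) enabled at some configuration of `C`. -/
def outSet (M : VPTS L kind) (LU : Set L) (C : Set M.Conf) : Set L :=
  { ℓ | ℓ ∈ LU ∧ ∃ c ∈ C, ∃ c', M.Obs c [ℓ] c' }

/-- `I` ioco-like conforms to `S`, with output alphabet `LU`. -/
def Ioco (LU : Set L) (I S : VPTS L kind) : Prop :=
  ∀ σ ∈ S.otr, ∀ q₀ ∈ I.init, ∀ ℓ ∈ I.outSet LU (I.after (q₀, []) σ),
    ∃ s₀ ∈ S.init, ℓ ∈ S.outSet LU (S.after (s₀, []) σ)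

/-- A VPTS is deterministic: at most one initial state and each observable trace
reaches a unique configuration. -/
def Deterministic (M : VPTS L kind) : Prop :=
  M.init.Subsingleton ∧
  ∀ (σ : List L), ∀ s₀ ∈ M.init, ∀ s₀' ∈ M.init, ∀ c c',
    M.Obs (s₀, []) σ c → M.Obs (s₀', []) σ c' → c = c'

/-- The cross product of two VPTSs over a common alphabet: observable moves
synchronize, silent moves interleave. -/
def prod (M N : VPTS L kind) : VPTS L kind where
  State := M.State × N.State
  Stack := M.Stack × N.Stack
  fintypeState := inferInstance
  init := M.init ×ˢ N.init
  pushT := { t | (t.1.1, t.2.1, t.2.2.1.1, t.2.2.2.1) ∈ M.pushT ∧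
                 (t.1.2, t.2.1, t.2.2.1.2, t.2.2.2.2) ∈ N.pushT }
  popT := { t |
      match t.2.2.1 with
      | some Z => (t.1.1, t.2.1, some Z.1, t.2.2.2.1) ∈ M.popT ∧
                  (t.1.2, t.2.1, some Z.2, t.2.2.2.2) ∈ N.popT
      | none => (t.1.1, t.2.1, (none : Option M.Stack), t.2.2.2.1) ∈ M.popT ∧
                (t.1.2, t.2.1, (none : Option N.Stack), t.2.2.2.2) ∈ N.popT }
  intT := { t |
      match t.2.1 with
      | some a => (t.1.1, some a, t.2.2.1) ∈ M.intT ∧ (t.1.2, some a, t.2.2.2) ∈ N.intT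
      | none => (t.1.1 = t.2.2.1 ∧ (t.1.2, none, t.2.2.2) ∈ N.intT) ∨
                (t.1.2 = t.2.2.2 ∧ (t.1.1, none, t.2.2.1) ∈ M.intT) }
  push_call := fun _ _ _ _ h => M.push_call _ _ _ _ h.1
  pop_ret := by
    intro p a Z q h
    cases Z with
    | some Z => exact M.pop_ret _ _ _ _ h.1
    | none => exact M.pop_ret _ _ _ _ h.1
  int_simple := fun _ _ _ h => M.int_simple _ _ _ h.1

/-- `I` passes the fault model `(T, fail)`: no run of the cross product reaches
the `fail` state of `T`. -/
def Passes (T : VPTS L kind) (fail : T.State) (I : VPTS L kind) : Prop :=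
  ∀ (σ : List L), ∀ t₀ ∈ T.init, ∀ q₀ ∈ I.init, ∀ (q : I.State)
    (α : List (T.Stack × I.Stack)),
    ¬ (T.prod I).Obs ((t₀, q₀), []) σ ((fail, q), α)

/-- `Q` adheres to the test suite `T`. -/
def Adheres (Q : VPTS L kind) (T : Set (List L)) : Prop := Q.otr ∩ T = ∅

/-- `T` is a complete (sound and exhaustive) test suite for `S` and `(D,F)`. -/
def CompleteSuite (S : VPTS L kind) (D F : Set (List L)) (T : Set (List L)) : Prop :=
  ∀ I : VPTS L kind, (Adheres I T ↔ VConf I S D F)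

/-- The concatenation `otr(S)·LU`. -/
def otrConcat (S : VPTS L kind) (LU : Set L) : Set (List L) :=
  { w | ∃ σ ∈ S.otr, ∃ ℓ ∈ LU, w = σ ++ [ℓ] }

end VPTS

/-! Fold the ε-moves of `M` into its visible moves: from a copy `inl p` of a state `p`, the
automaton reads a symbol wherever `M` can read it after ε-moves from `p`, so along a simulated run
the state of the copy is always ε-behind the state of `M`. Two states are added: an accepting state
`inr true`, entered by reading a symbol of `B` from a state that ε-reaches a final state of `M`,
and a sink `inr false` that every state enters on every symbol, which makes the automaton
non-blocking. The only move out of `inr true` leads to the sink, so an accepted word is an accepted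
word of `M` followed by one symbol of `B`; there are `n + 2 ≤ 2n + 2` states. -/

namespace VPA

variable {A : Type} {kind : A → VPKind}

def EpsReach (M : VPA A kind) : M.State → M.State → Prop :=
  Relation.ReflTransGen fun p q => (p, none, q) ∈ M.intT

def ReachesFinalByEps (M : VPA A kind) (p : M.State) : Prop :=
  ∃ f ∈ M.final, M.EpsReach p f

variable {M : VPA A kind}

theorem EpsReach.steps {p q : M.State} (h : M.EpsReach p q) (w : List A)
    (α : List M.Stack) : M.Steps (p, w, α) (q, w, α) := by
  induction h with
  | refl => exact .refl
  | tail _ hpq ih => exact ih.tail (.eps hpq)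

theorem Step.exists_input {c d : M.Conf} (h : M.Step c d) :
    ∃ σ, c.2.1 = σ ++ d.2.1 ∧ ∀ u, M.Step (c.1, σ ++ u, c.2.2) (d.1, u, d.2.2) := by
  cases h with
  | push h => exact ⟨[_], rfl, fun _ => .push h⟩
  | pop h => exact ⟨[_], rfl, fun _ => .pop h⟩
  | popEmpty h => exact ⟨[_], rfl, fun _ => .popEmpty h⟩
  | int h => exact ⟨[_], rfl, fun _ => .int h⟩
  | eps h => exact ⟨[], rfl, fun _ => .eps h⟩

theorem Steps.exists_input {c d : M.Conf} (h : M.Steps c d) :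
    ∃ σ, c.2.1 = σ ++ d.2.1 ∧ ∀ u, M.Steps (c.1, σ ++ u, c.2.2) (d.1, u, d.2.2) := by
  induction h with
  | refl => exact ⟨[], rfl, fun _ => .refl⟩
  | tail _ hlast ih =>
    obtain ⟨σ, hσ, hrun⟩ := ih
    obtain ⟨τ, hτ, hstep⟩ := hlast.exists_input
    refine ⟨σ ++ τ, by rw [hσ, hτ, List.append_assoc], fun u => ?_⟩
    rw [List.append_assoc]
    exact (hrun _).tail (hstep u)

theorem Steps.append_input {p q : M.State} {σ : List A} {α β : List M.Stack}
    (h : M.Steps (p, σ, α) (q, [], β)) (u : List A) : M.Steps (p, σ ++ u, α) (q, u, β) := by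
  obtain ⟨τ, hτ, hrun⟩ := h.exists_input
  obtain rfl : σ = τ := by simpa using hτ
  exact hrun u

theorem Steps.exists_eq_append {p q : M.State} {w u : List A} {α β : List M.Stack}
    (h : M.Steps (p, w, α) (q, u, β)) : ∃ σ, w = σ ++ u ∧ M.Steps (p, σ, α) (q, [], β) := by
  obtain ⟨σ, hσ, hrun⟩ := h.exists_input
  exact ⟨σ, hσ, by simpa using hrun []⟩

end VPA

namespace VPA.ConcatSymbols

variable {A : Type} {kind : A → VPKind} (M : VPA A kind) (B : Set A)

inductive Jump : M.State ⊕ Bool → A → M.State ⊕ Bool → Prop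
  | accept {p : M.State} {a : A} : M.ReachesFinalByEps p → a ∈ B → Jump (.inl p) a (.inr true)
  | sink {s : M.State ⊕ Bool} {a : A} : Jump s a (.inr false)

inductive PushT : (M.State ⊕ Bool) × A × Option M.Stack × (M.State ⊕ Bool) → Prop
  | sim {p p' q : M.State} {a : A} {Z : M.Stack} :
      M.EpsReach p p' → (p', a, Z, q) ∈ M.pushT → PushT (.inl p, a, some Z, .inl q)
  | jump {s r : M.State ⊕ Bool} {a : A} :
      kind a = .call → Jump M B s a r → PushT (s, a, none, r)

inductive PopT : (M.State ⊕ Bool) × A × Option (Option M.Stack) × (M.State ⊕ Bool) → Prop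
  | sim {p p' q : M.State} {a : A} {Z : M.Stack} :
      M.EpsReach p p' → (p', a, some Z, q) ∈ M.popT → PopT (.inl p, a, some (some Z), .inl q)
  | simBottom {p p' q : M.State} {a : A} :
      M.EpsReach p p' → (p', a, none, q) ∈ M.popT → PopT (.inl p, a, none, .inl q)
  | jump {s r : M.State ⊕ Bool} {a : A} {Z : Option (Option M.Stack)} :
      kind a = .ret → Jump M B s a r → PopT (s, a, Z, r)

inductive IntT : (M.State ⊕ Bool) × Option A × (M.State ⊕ Bool) → Prop
  | sim {p p' q : M.State} {a : A} :
      M.EpsReach p p' → (p', some a, q) ∈ M.intT → IntT (.inl p, some a, .inl q)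
  | jump {s r : M.State ⊕ Bool} {a : A} :
      kind a = .intern → Jump M B s a r → IntT (s, some a, r)

end VPA.ConcatSymbols

open VPA.ConcatSymbols in
def VPA.concatSymbols {A : Type} {kind : A → VPKind} (M : VPA A kind) (B : Set A) :
    VPA A kind where
  State := M.State ⊕ Bool
  -- jumps on call symbols push `none`, since `M.Stack` may be empty
  Stack := Option M.Stack
  fintypeState := inferInstance
  init := .inl '' M.init
  final := {.inr true}
  pushT := {t | PushT M B t}
  popT := {t | PopT M B t}
  intT := {t | IntT M B t}
  push_call := by
    rintro _ _ _ _ (⟨-, h⟩ | ⟨h, -⟩)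
    exacts [M.push_call _ _ _ _ h, h]
  pop_ret := by
    rintro _ _ _ _ (⟨-, h⟩ | ⟨-, h⟩ | ⟨h, -⟩)
    exacts [M.pop_ret _ _ _ _ h, M.pop_ret _ _ _ _ h, h]
  int_simple := by
    rintro _ _ _ (⟨-, h⟩ | ⟨h, -⟩)
    exacts [M.int_simple _ _ _ h, h]

namespace VPA.ConcatSymbols

variable {A : Type} {kind : A → VPKind} {M : VPA A kind} {B : Set A}

theorem exists_step_of_jump {s r : M.State ⊕ Bool} {a : A} (h : Jump M B s a r)
    (w : List A) (β : List (Option M.Stack)) :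
    ∃ β', (M.concatSymbols B).Step (s, a :: w, β) (r, w, β') := by
  cases hk : kind a with
  | call => exact ⟨_, .push (PushT.jump hk h)⟩
  | ret =>
    cases β with
    | nil => exact ⟨_, .popEmpty (PopT.jump hk h)⟩
    | cons Z β => exact ⟨_, .pop (PopT.jump (Z := some Z) hk h)⟩
  | intern => exact ⟨_, .int (IntT.jump hk h)⟩

theorem exists_steps_inl_of_step {c d : M.Conf} (h : M.Step c d) {p : M.State}
    (hp : M.EpsReach p c.1) :
    ∃ q, M.EpsReach q d.1 ∧ (M.concatSymbols B).Steps (.inl p, c.2.1, c.2.2.map some)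
      (.inl q, d.2.1, d.2.2.map some) := by
  cases h with
  | push h => exact ⟨_, .refl, .single (.push (PushT.sim hp h))⟩
  | pop h => exact ⟨_, .refl, .single (.pop (PopT.sim hp h))⟩
  | popEmpty h => exact ⟨_, .refl, .single (.popEmpty (PopT.simBottom hp h))⟩
  | int h => exact ⟨_, .refl, .single (.int (IntT.sim hp h))⟩
  | eps h => exact ⟨p, hp.tail h, .refl⟩

theorem exists_steps_inl_of_steps {c d : M.Conf} (h : M.Steps c d) {p : M.State}
    (hp : M.EpsReach p c.1) :
    ∃ q, M.EpsReach q d.1 ∧ (M.concatSymbols B).Steps (.inl p, c.2.1, c.2.2.map some)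
      (.inl q, d.2.1, d.2.2.map some) := by
  induction h with
  | refl => exact ⟨p, hp, .refl⟩
  | tail _ hlast ih =>
    obtain ⟨q, hq, hrun⟩ := ih
    obtain ⟨r, hr, hrun'⟩ := exists_steps_inl_of_step hlast hq
    exact ⟨r, hr, hrun.trans hrun'⟩

theorem exists_steps_of_step_inl {p q : M.State} {w w' : List A} {δ β : List (Option M.Stack)}
    (h : (M.concatSymbols B).Step (.inl p, w, δ) (.inl q, w', β)) {α : List M.Stack}
    (hδ : δ = α.map some) : ∃ γ, β = γ.map some ∧ M.Steps (p, w, α) (q, w', γ) := by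
  cases h with
  | push h =>
    rcases h with ⟨hp, h⟩ | ⟨-, ⟨⟩⟩
    exact ⟨_ :: α, by rw [hδ]; rfl, (hp.steps _ _).tail (.push h)⟩
  | pop h =>
    rcases h with ⟨hp, h⟩ | - | ⟨-, ⟨⟩⟩
    obtain ⟨Z, γ, rfl, hZ, rfl⟩ := List.map_eq_cons_iff.mp hδ.symm
    cases hZ
    exact ⟨γ, rfl, (hp.steps _ _).tail (.pop h)⟩
  | popEmpty h =>
    rcases h with - | ⟨hp, h⟩ | ⟨-, ⟨⟩⟩
    obtain rfl := List.map_eq_nil_iff.mp hδ.symm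
    exact ⟨[], rfl, (hp.steps _ _).tail (.popEmpty h)⟩
  | int h =>
    rcases h with ⟨hp, h⟩ | ⟨-, ⟨⟩⟩
    exact ⟨α, hδ, (hp.steps _ _).tail (.int h)⟩
  | eps h => rcases h with ⟨⟩

theorem step_to_inl_from_inl {c : (M.concatSymbols B).Conf} {q : M.State} {w : List A}
    {β : List (Option M.Stack)} (h : (M.concatSymbols B).Step c (.inl q, w, β)) :
    ∃ p, c.1 = .inl p := by
  cases h with
  | push h | int h => rcases h with - | ⟨-, ⟨⟩⟩; exact ⟨_, rfl⟩
  | pop h | popEmpty h => rcases h with - | - | ⟨-, ⟨⟩⟩; exact ⟨_, rfl⟩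
  | eps h => rcases h with ⟨⟩

theorem exists_steps_of_steps_inl {p : M.State} {w : List A} {α : List M.Stack}
    {d : (M.concatSymbols B).Conf} (h : (M.concatSymbols B).Steps (.inl p, w, α.map some) d)
    {q : M.State} (hd : d.1 = .inl q) :
    ∃ γ, d.2.2 = γ.map some ∧ M.Steps (p, w, α) (q, d.2.1, γ) := by
  induction h generalizing q with
  | refl =>
    cases Sum.inl_injective hd
    exact ⟨α, rfl, .refl⟩
  | @tail e d _ hlast ih =>
    obtain ⟨s, u, δ⟩ := e
    obtain ⟨q', w', β⟩ := d
    cases hd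
    obtain ⟨p', rfl⟩ := step_to_inl_from_inl hlast
    obtain ⟨γ, rfl, hrun⟩ := ih rfl
    obtain ⟨γ', rfl, hstep⟩ := exists_steps_of_step_inl hlast rfl
    exact ⟨γ', rfl, hrun.trans hstep⟩

theorem exists_jump_of_step_to_accept {c : (M.concatSymbols B).Conf} {w : List A}
    {β : List (Option M.Stack)} (h : (M.concatSymbols B).Step c (.inr true, w, β)) :
    ∃ p b, c.1 = .inl p ∧ M.ReachesFinalByEps p ∧ b ∈ B ∧ c.2.1 = b :: w := by
  have hjump : ∃ b, Jump M B c.1 b (.inr true) ∧ c.2.1 = b :: w := by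
    cases h with
    | push h | int h => rcases h with - | ⟨-, hj⟩; exact ⟨_, hj, rfl⟩
    | pop h | popEmpty h => rcases h with - | - | ⟨-, hj⟩; exact ⟨_, hj, rfl⟩
    | eps h => rcases h with ⟨⟩
  obtain ⟨b, hj, hw⟩ := hjump
  obtain ⟨s, u, δ⟩ := c
  obtain ⟨hp, hb⟩ := hj
  exact ⟨_, b, rfl, hp, hb, hw⟩

theorem lang_subset :
    (M.concatSymbols B).Lang ⊆ {w | ∃ σ ∈ M.Lang, ∃ b ∈ B, w = σ ++ [b]} := by
  rintro w ⟨_, ⟨s₀, hs₀, rfl⟩, _, rfl, β, hrun⟩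
  rcases hrun.cases_tail with hrefl | ⟨e, hrun, hlast⟩
  · cases hrefl
  obtain ⟨p, b, hp, ⟨f, hf, hpf⟩, hb, hw⟩ := exists_jump_of_step_to_accept hlast
  obtain ⟨γ, -, hM⟩ := exists_steps_of_steps_inl (α := []) hrun hp
  rw [hw] at hM
  obtain ⟨σ, rfl, hσ⟩ := hM.exists_eq_append
  exact ⟨σ, ⟨s₀, hs₀, f, hf, γ, hσ.trans (hpf.steps _ _)⟩, b, hb, rfl⟩

theorem subset_lang :
    {w | ∃ σ ∈ M.Lang, ∃ b ∈ B, w = σ ++ [b]} ⊆ (M.concatSymbols B).Lang := by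
  rintro _ ⟨σ, ⟨s₀, hs₀, f, hf, β, hrun⟩, b, hb, rfl⟩
  obtain ⟨q, hqf, hsim⟩ := exists_steps_inl_of_steps (B := B) hrun (p := s₀) .refl
  obtain ⟨β', hacc⟩ := exists_step_of_jump (Jump.accept ⟨f, hf, hqf⟩ hb) [] (β.map some)
  exact ⟨.inl s₀, ⟨s₀, hs₀, rfl⟩, .inr true, rfl, β', (hsim.append_input [b]).tail hacc⟩

end VPA.ConcatSymbols

namespace VPA

variable {A : Type} {kind : A → VPKind} {M : VPA A kind} {B : Set A}

theorem nonBlocking_concatSymbols : (M.concatSymbols B).NonBlocking := by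
  intro s σ
  induction σ generalizing s with
  | nil => exact fun α => ⟨s, α, .refl⟩
  | cons a σ ih =>
    intro α
    obtain ⟨β, hstep⟩ := ConcatSymbols.exists_step_of_jump (B := B) (s := s) (a := a) .sink σ α
    obtain ⟨p, γ, hrun⟩ := ih _ β
    exact ⟨p, γ, .head hstep hrun⟩

theorem noEps_concatSymbols : (M.concatSymbols B).NoEps := by
  rintro p q ⟨⟩

theorem card_concatSymbols_state :
    Fintype.card (M.concatSymbols B).State = Fintype.card M.State + 2 :=
  (Fintype.card_sum (α := M.State) (β := Bool)).trans (by rw [Fintype.card_bool])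

theorem lang_concatSymbols :
    (M.concatSymbols B).Lang = {w | ∃ σ ∈ M.Lang, ∃ b ∈ B, w = σ ++ [b]} :=
  ConcatSymbols.lang_subset.antisymm ConcatSymbols.subset_lang

end VPA

/-- For a VPA `S` with `n` states and `B ⊆ A`, there is a
non-blocking VPA with at most `2n+2` states and no ε-transitions accepting
`L(S)·B`. -/
theorem vpa_concat_symbols {A : Type} {kind : A → VPKind} (M : VPA A kind)
    (B : Set A) :
    ∃ Q : VPA A kind, Q.NonBlocking ∧ Q.NoEps ∧
      Fintype.card Q.State ≤ 2 * Fintype.card M.State + 2 ∧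
      Q.Lang = { w | ∃ σ ∈ M.Lang, ∃ b ∈ B, w = σ ++ [b] } := by
  refine ⟨M.concatSymbols B, M.nonBlocking_concatSymbols, M.noEps_concatSymbols, ?_,
    M.lang_concatSymbols⟩
  rw [VPA.card_concatSymbols_state]
  omega
end

section
/- Let S be a specification IOVPTS and I an implementation IOVPTS over the same alphabet L = L_I ∪ L_U. Then I ioco-like-conforms to S if and only if otr(I) ∩ T = ∅, where T = (L* − otr(S)) ∩ (otr(S)·L_U). -/
namespace VPTS

variable {L : Type} {kind : L → VPKind}

/-!
Weak moves compose along concatenation of traces and every run on `σ ++ τ` splits at the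
end of `σ`.  Hence an output `ℓ` is enabled after `σ` from some initial state exactly when
`σ ++ [ℓ]` is an observable trace, so ioco-like conformance says that every extension
`σ ++ [ℓ]` in `otr I` of a trace `σ` of `S` by an output is again a trace of `S`.
-/

variable {M : VPTS L kind}

theorem Obs.append {c c' c'' : M.Conf} {σ τ : List L}
    (h₁ : M.Obs c σ c') (h₂ : M.Obs c' τ c'') : M.Obs c (σ ++ τ) c'' := by
  induction h₁ with
  | refl => exact h₂
  | push ht _ ih => exact .push ht (ih h₂)
  | pop ht _ ih => exact .pop ht (ih h₂)
  | popEmpty ht _ ih => exact .popEmpty ht (ih h₂)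
  | int ht _ ih => exact .int ht (ih h₂)
  | silent ht _ ih => exact .silent ht (ih h₂)

theorem Obs.exists_of_cons {c c'' : M.Conf} {a : L} {ρ : List L}
    (h : M.Obs c (a :: ρ) c'') : ∃ d, M.Obs c [a] d ∧ M.Obs d ρ c'' := by
  generalize hw : a :: ρ = w at h
  induction h with
  | refl => cases hw
  | push ht hρ => cases hw; exact ⟨_, .push ht (.refl _), hρ⟩
  | pop ht hρ => cases hw; exact ⟨_, .pop ht (.refl _), hρ⟩
  | popEmpty ht hρ => cases hw; exact ⟨_, .popEmpty ht (.refl _), hρ⟩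
  | int ht hρ => cases hw; exact ⟨_, .int ht (.refl _), hρ⟩
  | silent ht _ ih =>
    obtain ⟨d, had, hρ⟩ := ih hw
    exact ⟨d, .silent ht had, hρ⟩

theorem obs_append_iff {c c'' : M.Conf} {σ τ : List L} :
    M.Obs c (σ ++ τ) c'' ↔ ∃ c', M.Obs c σ c' ∧ M.Obs c' τ c'' := by
  refine ⟨fun h => ?_, fun ⟨_, h₁, h₂⟩ => h₁.append h₂⟩
  induction σ generalizing c with
  | nil => exact ⟨c, .refl c, h⟩
  | cons a σ ih =>
    obtain ⟨d, had, hd⟩ := Obs.exists_of_cons h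
    obtain ⟨c', hσ, hτ⟩ := ih hd
    exact ⟨c', had.append hσ, hτ⟩

theorem exists_init_mem_outSet_after_iff {LU : Set L} {σ : List L} {ℓ : L} :
    (∃ s₀ ∈ M.init, ℓ ∈ M.outSet LU (M.after (s₀, []) σ)) ↔ ℓ ∈ LU ∧ σ ++ [ℓ] ∈ M.otr := by
  simp only [outSet, after, otr, Set.mem_ofPred_eq, obs_append_iff]
  constructor
  · rintro ⟨s₀, hs₀, hℓ, c, hσ, c', hℓc⟩
    exact ⟨hℓ, s₀, hs₀, c', c, hσ, hℓc⟩
  · rintro ⟨hℓ, s₀, hs₀, c', c, hσ, hℓc⟩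
    exact ⟨s₀, hs₀, hℓ, c, hσ, c', hℓc⟩

theorem ioco_iff_forall_append_mem_otr {LU : Set L} {I S : VPTS L kind} :
    Ioco LU I S ↔ ∀ σ ∈ S.otr, ∀ ℓ ∈ LU, σ ++ [ℓ] ∈ I.otr → σ ++ [ℓ] ∈ S.otr := by
  constructor
  · intro h σ hσ ℓ hℓ hI
    obtain ⟨q₀, hq₀, hout⟩ := exists_init_mem_outSet_after_iff.mpr ⟨hℓ, hI⟩
    exact (exists_init_mem_outSet_after_iff.mp (h σ hσ q₀ hq₀ ℓ hout)).2
  · intro h σ hσ q₀ hq₀ ℓ hout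
    obtain ⟨hℓ, hI⟩ := exists_init_mem_outSet_after_iff.mp ⟨q₀, hq₀, hout⟩
    exact exists_init_mem_outSet_after_iff.mpr ⟨hℓ, h σ hσ ℓ hℓ hI⟩

end VPTS

/-- `I` ioco-like conforms to `S` iff `otr(I) ∩ T = ∅` where
`T = otr(S)ᶜ ∩ (otr(S)·L_U)`. -/
theorem ioco_iff_inter_empty {L : Type} {kind : L → VPKind} (LU : Set L)
    (S I : VPTS L kind) :
    VPTS.Ioco LU I S ↔ I.otr ∩ (S.otrᶜ ∩ S.otrConcat LU) = ∅ := by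
  rw [VPTS.ioco_iff_forall_append_mem_otr, Set.eq_empty_iff_forall_notMem]
  constructor
  · rintro h _ ⟨hI, hS, σ, hσ, ℓ, hℓ, rfl⟩
    exact hS (h σ hσ ℓ hℓ hI)
  · intro h σ hσ ℓ hℓ hI
    by_contra hS
    exact h _ ⟨hI, hS, σ, hσ, ℓ, hℓ, rfl⟩
end
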